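/- Let u, v be nontrivial elements of F_r. Then limsup_{n → ∞} of (1/|S_n|) · Σ_{γ ∈ S_n, u prefix of γ⁻¹} ⟨π(γ)1_B, 1_{B_v}⟩ / Ξ(γ) is at most μ(B_u) · μ(B_v), where ⟨π(γ)1_B, 1_{B_v}⟩ = ∫_{B_v} P(γ,ξ)^{1/2} dμ(ξ). (Equivalently, limsup_n ⟨M_n(χ_u) 1_{B_v}, 1_B⟩ ≤ μ(B_u)μ(B_v).) -/

import Mathlib

/-!
Setting: the free group `F_r = ⟨a₁,…,a_r⟩` (`r ≥ 2`), its boundary `B` of infinite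
reduced words, the visual measure `μ` on `B`, the Gromov product, the Poisson kernel
`P(γ,ξ) = (2r-1)^(2(γ|ξ)-|γ|)` and the Harish-Chandra function `Ξ`.
-/

open MeasureTheory Filter Topology ComplexConjugate
open scoped ENNReal

namespace ArxivFree

/-- The alphabet `S = {a₁^{±1},…,a_r^{±1}}` of generators and their inverses:
a letter is a generator together with a sign. -/
abbrev Letter (r : ℕ) := Fin r × Bool

/-- The inverse of a letter. -/
def bar {r : ℕ} (x : Letter r) : Letter r := (x.1, !x.2)

/-- The boundary `B`: infinite reduced words over the alphabet, i.e. sequences of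
letters in which no letter is immediately followed by its inverse. -/
abbrev Boundary (r : ℕ) := {ξ : ℕ → Letter r // ∀ i, ξ (i + 1) ≠ bar (ξ i)}

/-- `l` is a (finite) prefix of the infinite word `ξ`. -/
def IsPrefixSeq {r : ℕ} (l : List (Letter r)) (ξ : ℕ → Letter r) : Prop :=
  ∀ i, i < l.length → l[i]? = some (ξ i)

/-- The cylinder `B_u`: infinite reduced words admitting the reduced word of `u`
as a prefix. -/
def cylinder {r : ℕ} (u : FreeGroup (Fin r)) : Set (Boundary r) :=
  {ξ | IsPrefixSeq (FreeGroup.toWord u) ξ.1}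

/-- The Gromov product: the length of the longest common prefix of the finite word `l`
and the infinite word `ξ`. -/
def gromov {r : ℕ} (l : List (Letter r)) (ξ : ℕ → Letter r) : ℕ :=
  Nat.findGreatest (fun k => ∀ i, i < k → l[i]? = some (ξ i)) l.length

/-- The Poisson kernel `P(γ,ξ) = (2r-1)^(2(γ|ξ) - |γ|)`. -/
noncomputable def PK {r : ℕ} (γ : FreeGroup (Fin r)) (ξ : Boundary r) : ℝ :=
  (2 * (r : ℝ) - 1) ^
    (2 * (gromov (FreeGroup.toWord γ) ξ.1 : ℤ) - ((FreeGroup.toWord γ).length : ℤ))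

/-- The sphere `S_n ⊆ F_r` of elements of word length `n`, as a finite set. -/
noncomputable def sphere (r n : ℕ) : Finset (FreeGroup (Fin r)) :=
  (Set.Finite.preimage (Function.Injective.injOn FreeGroup.toWord_injective)
    (List.finite_length_eq (Letter r) n)).toFinset

/-- The Harish-Chandra function `Ξ(γ) = ∫_B P(γ,ξ)^{1/2} dμ(ξ)`. -/
noncomputable def HC {r : ℕ} (μ : Measure (Boundary r)) (γ : FreeGroup (Fin r)) : ℝ :=
  ∫ ξ, Real.sqrt (PK γ ξ) ∂μ

/-!
Write `q = 2r - 1`. Since `√P(γ,ξ) = q^(γ|ξ) / √q^|γ|` and `q^(γ|ξ) - 1` telescopes into a sum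
of `q^(k+1) - q^k` over the cylinders `B_{γ_1…γ_(k+1)}`, each of measure `1/(2r q^k)`, one gets
`Ξ(γ) = (1 + |γ|(r-1)/r) / √q^|γ|`. Hence the normalized coefficient
`⟨π(γ)1_B, 1_{B_v}⟩ / Ξ(γ)` is at most `1`, and it is `O(1/|γ|)` unless `v` is a prefix of `γ`,
because `(γ|ξ) < |v|` on `B_v` otherwise. The limsup is therefore at most the limiting proportion
of `γ ∈ S_n` that start with `v` and end with `u⁻¹`. Such a word is `v m u⁻¹` with a reduced
middle word `m` of length `k = n - |u| - |v|` whose first and last letters are each forbidden one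
value; appending a letter shows that the number of those with a prescribed last letter differs
from `q^k/(2r)` by at most `q/(2r)`, so the proportion is `μ(B_u)μ(B_v) + O(q^(-n))`.
-/

open Finset
open FreeGroup (IsReduced invRev toWord mk)

lemma one_le_two_mul_sub_one {r : ℕ} (hr : 0 < r) : (1 : ℝ) ≤ 2 * r - 1 := by
  have : (1 : ℝ) ≤ r := by exact_mod_cast hr
  linarith

lemma exists_eq_append_append_of_prefix_of_suffix {α : Type*} {p s w : List α}
    (hp : p <+: w) (hs : s <:+ w) (hlen : p.length + s.length ≤ w.length) :
    ∃ m, w = p ++ m ++ s := by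
  obtain ⟨t, rfl⟩ := hp
  obtain ⟨m, rfl⟩ : s <:+ t :=
    List.suffix_of_suffix_length_le hs (List.suffix_append p t) (by simp at hlen; omega)
  exact ⟨m, by simp⟩

lemma pow_eq_one_add_sum_ite {R : Type*} [CommRing R] (q : R) {g N : ℕ} (h : g ≤ N) :
    q ^ g = 1 + ∑ k ∈ range N, if k < g then q ^ (k + 1) - q ^ k else 0 := by
  rw [← sum_filter, show {k ∈ range N | k < g} = range g by ext; simp; omega,
    sum_range_sub (q ^ ·)]
  ring

lemma sum_le_card_filter_add_card_filter_not_mul {α : Type*} (s : Finset α) (p : α → Prop)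
    [DecidablePred p] {f : α → ℝ} {ε : ℝ} (h₁ : ∀ a ∈ s, p a → f a ≤ 1)
    (h₂ : ∀ a ∈ s, ¬ p a → f a ≤ ε) :
    ∑ a ∈ s, f a ≤ #{a ∈ s | p a} + #{a ∈ s | ¬ p a} * ε := by
  rw [← sum_filter_add_sum_filter_not s p]
  gcongr
  · simpa using sum_le_card_nsmul _ _ 1 fun a ha => h₁ a (mem_filter.1 ha).1 (mem_filter.1 ha).2
  · simpa using sum_le_card_nsmul _ _ ε fun a ha => h₂ a (mem_filter.1 ha).1 (mem_filter.1 ha).2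

lemma limsup_le_of_eventually_le_of_tendsto {ι : Type*} {l : Filter ι} [l.NeBot]
    {f g : ι → ℝ} {a b : ℝ} (hf : ∀ i, b ≤ f i) (hfg : ∀ᶠ i in l, f i ≤ g i)
    (hg : Tendsto g l (𝓝 a)) : limsup f l ≤ a := by
  rw [← hg.limsup_eq]
  exact limsup_le_limsup hfg (isCoboundedUnder_le_of_le l hf) hg.isBoundedUnder_le

section Words

variable {r : ℕ}

@[simp] lemma bar_bar (x : Letter r) : bar (bar x) = x := by simp [bar]

lemma eq_bar_comm {x y : Letter r} : x = bar y ↔ y = bar x := by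
  constructor <;> rintro rfl <;> simp

lemma isReduced_append {l₁ l₂ : List (Letter r)} :
    IsReduced (l₁ ++ l₂) ↔
      IsReduced l₁ ∧ IsReduced l₂ ∧ ∀ x ∈ l₁.getLast?, ∀ y ∈ l₂.head?, y ≠ bar x := by
  have rel (x y : Letter r) : (x.1 = y.1 → x.2 = y.2) ↔ y ≠ bar x := by
    obtain ⟨x₁, x₂⟩ := x; obtain ⟨y₁, y₂⟩ := y
    cases x₂ <;> cases y₂ <;> simp [bar, eq_comm]
  simp only [FreeGroup.IsReduced, List.isChain_append, rel]

lemma isReduced_cons {x : Letter r} {t : List (Letter r)} :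
    IsReduced (x :: t) ↔ t.head? ≠ some (bar x) ∧ IsReduced t := by
  rw [← List.singleton_append, isReduced_append]
  rcases t with _ | ⟨y, t⟩ <;> simp [and_comm]

lemma isReduced_append_singleton {t : List (Letter r)} {b : Letter r} :
    IsReduced (t ++ [b]) ↔ IsReduced t ∧ t.getLast? ≠ some (bar b) := by
  rw [isReduced_append]
  rcases t.eq_nil_or_concat with rfl | ⟨L, a, rfl⟩ <;> simp [eq_bar_comm]

lemma prefix_invRev_iff {p w : List (Letter r)} : p <+: invRev w ↔ invRev p <:+ w := by
  constructor
  · rintro ⟨t, ht⟩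
    exact ⟨invRev t, by rw [← FreeGroup.invRev_append, ht, FreeGroup.invRev_invRev]⟩
  · rintro ⟨t, rfl⟩
    exact ⟨invRev t, by rw [FreeGroup.invRev_append, FreeGroup.invRev_invRev]⟩

lemma card_letter : Fintype.card (Letter r) = 2 * r := by
  simp [mul_comm]

noncomputable def reducedWords (r k : ℕ) : Finset (List (Letter r)) :=
  (sphere r k).image toWord

lemma mem_sphere {n : ℕ} {γ : FreeGroup (Fin r)} : γ ∈ sphere r n ↔ γ.toWord.length = n := by
  simp [sphere]

lemma mem_reducedWords {k : ℕ} {w : List (Letter r)} :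
    w ∈ reducedWords r k ↔ w.length = k ∧ IsReduced w := by
  simp only [reducedWords, mem_image, mem_sphere]
  constructor
  · rintro ⟨γ, hγ, rfl⟩
    exact ⟨hγ, FreeGroup.isReduced_toWord⟩
  · rintro ⟨hw, hred⟩
    have hw' : (mk w).toWord = w := by rw [FreeGroup.toWord_mk, hred.reduce_eq]
    exact ⟨mk w, by rw [hw', hw], hw'⟩

lemma card_sphere_filter (n : ℕ) (P : List (Letter r) → Prop) [DecidablePred P] :
    #{γ ∈ sphere r n | P γ.toWord} = #{w ∈ reducedWords r n | P w} := by
  rw [reducedWords, filter_image, card_image_of_injective _ FreeGroup.toWord_injective]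

lemma card_sphere (n : ℕ) : #(sphere r n) = #(reducedWords r n) := by
  simpa using card_sphere_filter (r := r) n (fun _ => True)

lemma card_filter_head_mem_succ (k : ℕ) (L : Finset (Letter r)) :
    #{w ∈ reducedWords r (k + 1) | ∃ x ∈ L, w.head? = some x} =
      ∑ x ∈ L, #{t ∈ reducedWords r k | t.head? ≠ some (bar x)} := by
  have hcons : {w ∈ reducedWords r (k + 1) | ∃ x ∈ L, w.head? = some x} =
      L.biUnion fun x => {t ∈ reducedWords r k | t.head? ≠ some (bar x)}.image (x :: ·) := by
    ext w
    rcases w with _ | ⟨x, t⟩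
    · simp
    · simp [mem_reducedWords, isReduced_cons, -Prod.exists]
      tauto
  rw [hcons, card_biUnion]
  · simp_rw [card_image_of_injective _ List.cons_injective]
  · intro x _ y _ hxy
    simp only [disjoint_left, mem_image]
    rintro _ ⟨t, _, rfl⟩ ⟨t', _, h⟩
    exact hxy (List.cons_eq_cons.1 h).1.symm

lemma card_reducedWords_head_ne (k : ℕ) (c : Letter r) :
    #{w ∈ reducedWords r k | w.head? ≠ some c} = (2 * r - 1) ^ k := by
  induction k generalizing c with
  | zero =>
    have : {w ∈ reducedWords r 0 | w.head? ≠ some c} = {[]} := by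
      ext w
      rcases w with _ | ⟨x, t⟩ <;> simp [mem_reducedWords]
    simp [this]
  | succ k ih =>
    have hhead : {w ∈ reducedWords r (k + 1) | w.head? ≠ some c} =
        {w ∈ reducedWords r (k + 1) | ∃ x ∈ univ.erase c, w.head? = some x} := by
      refine filter_congr fun w hw => ?_
      rcases w with _ | ⟨x, t⟩
      · simp [mem_reducedWords] at hw
      · simp [eq_comm]
    rw [hhead, card_filter_head_mem_succ, sum_congr rfl fun x _ => ih (bar x), sum_const,
      card_erase_of_mem (mem_univ c), card_univ, card_letter, smul_eq_mul, pow_succ, mul_comm]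

lemma card_reducedWords_succ (k : ℕ) : #(reducedWords r (k + 1)) = 2 * r * (2 * r - 1) ^ k := by
  have hall : {w ∈ reducedWords r (k + 1) | ∃ x ∈ univ, w.head? = some x} =
      reducedWords r (k + 1) :=
    filter_true_of_mem fun w hw => by
      rcases w with _ | ⟨x, t⟩
      · simp [mem_reducedWords] at hw
      · simp
  rw [← hall, card_filter_head_mem_succ,
    sum_congr rfl fun x _ => card_reducedWords_head_ne k (bar x), sum_const, card_univ,
    card_letter, smul_eq_mul]

end Words

section Counting

variable {r : ℕ}

lemma card_getLast_ne_add_card_getLast_eq (k : ℕ) (c d : Letter r) :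
    #{w ∈ reducedWords r k | w.head? ≠ some c ∧ w.getLast? ≠ some d}
      + #{w ∈ reducedWords r k | w.head? ≠ some c ∧ w.getLast? = some d} = (2 * r - 1) ^ k := by
  rw [← card_reducedWords_head_ne k c, ← filter_filter, ← filter_filter, add_comm]
  exact card_filter_add_card_filter_not _

lemma card_getLast_eq_succ {k : ℕ} (hk : 1 ≤ k) (c b : Letter r) :
    #{w ∈ reducedWords r (k + 1) | w.head? ≠ some c ∧ w.getLast? = some b}
      = #{w ∈ reducedWords r k | w.head? ≠ some c ∧ w.getLast? ≠ some (bar b)} := by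
  have head_append {t : List (Letter r)} (ht : t.length = k) : (t ++ [b]).head? = t.head? :=
    List.head?_append_of_ne_nil _ (List.ne_nil_of_length_pos (by omega))
  symm
  apply card_nbij' (· ++ [b]) List.dropLast
  · intro t ht
    simp only [mem_coe, mem_filter, mem_reducedWords] at ht ⊢
    obtain ⟨⟨hlen, hred⟩, hhead, hlast⟩ := ht
    exact ⟨⟨by simp [hlen], isReduced_append_singleton.2 ⟨hred, hlast⟩⟩, by
      rwa [head_append hlen], by simp⟩
  · intro w hw
    simp only [mem_coe, mem_filter, mem_reducedWords] at hw ⊢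
    obtain ⟨⟨hlen, hred⟩, hhead, hlast⟩ := hw
    rw [← List.dropLast_append_getLast? b hlast] at hlen hred hhead
    have hlen' : w.dropLast.length = k := by simpa using hlen
    rw [head_append hlen'] at hhead
    exact ⟨⟨hlen', (isReduced_append_singleton.1 hred).1⟩, hhead,
      (isReduced_append_singleton.1 hred).2⟩
  · intro t _
    simp
  · intro w hw
    simp only [mem_coe, mem_filter] at hw
    exact List.dropLast_append_getLast? b hw.2.2

/-- By `card_getLast_eq_succ`, passing from `k` to `k + 1` (and from `b` to `bar b`) flips the
sign of the error term and keeps its modulus. -/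
lemma abs_two_mul_card_getLast_eq_sub_pow_le {k : ℕ} (hk : 1 ≤ k) (c b : Letter r) :
    |2 * r * (#{w ∈ reducedWords r k | w.head? ≠ some c ∧ w.getLast? = some b} : ℤ)
      - (2 * r - 1) ^ k| ≤ 2 * r - 1 := by
  have hr : 0 < r := c.1.pos
  induction k, hk using Nat.le_induction generalizing b with
  | base =>
    have hle : #{w ∈ reducedWords r 1 | w.head? ≠ some c ∧ w.getLast? = some b} ≤ 1 := by
      refine card_le_one.2 fun w hw w' hw' => ?_
      simp only [mem_filter, mem_reducedWords, List.length_eq_one_iff] at hw hw'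
      obtain ⟨⟨⟨x, rfl⟩, -⟩, -, hx⟩ := hw
      obtain ⟨⟨⟨x', rfl⟩, -⟩, -, hx'⟩ := hw'
      simp_all
    generalize #{w ∈ reducedWords r 1 | w.head? ≠ some c ∧ w.getLast? = some b} = D at hle ⊢
    have hr' : (1 : ℤ) ≤ r := by exact_mod_cast hr
    interval_cases D <;> rw [abs_le] <;> constructor <;> push_cast <;> linarith
  | succ k hk ih =>
    have hsplit := card_getLast_ne_add_card_getLast_eq k c (bar b)
    rw [← card_getLast_eq_succ hk] at hsplit
    zify [show 1 ≤ 2 * r by omega] at hsplit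
    have ih' := ih (bar b)
    rw [← abs_neg] at ih'
    convert ih' using 2
    linear_combination (2 * (r : ℤ)) * hsplit

lemma two_mul_card_head_ne_getLast_ne_le {k : ℕ} (hk : 1 ≤ k) (c d : Letter r) :
    2 * r * #{w ∈ reducedWords r k | w.head? ≠ some c ∧ w.getLast? ≠ some d}
      ≤ (2 * r - 1) ^ (k + 1) + (2 * r - 1) := by
  have hr : 0 < r := c.1.pos
  have hsplit := card_getLast_ne_add_card_getLast_eq k c d
  have herr := (abs_le.1 (abs_two_mul_card_getLast_eq_sub_pow_le hk c d)).1
  zify [show 1 ≤ 2 * r by omega] at hsplit ⊢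
  linear_combination (2 * (r : ℤ)) * hsplit + herr

lemma card_prefix_suffix_le {p s : List (Letter r)} (hp : p ≠ []) (hs : s ≠ []) {n : ℕ}
    (hn : p.length + s.length < n) :
    #{w ∈ reducedWords r n | p <+: w ∧ s <:+ w} ≤
      #{m ∈ reducedWords r (n - p.length - s.length) |
        m.head? ≠ some (bar (p.getLast hp)) ∧ m.getLast? ≠ some (bar (s.head hs))} := by
  refine (card_le_card fun w hw => ?_).trans (card_image_le (f := fun m => p ++ m ++ s))
  simp only [mem_filter, mem_reducedWords] at hw
  obtain ⟨⟨hlen, hred⟩, hpre, hsuf⟩ := hw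
  obtain ⟨m, rfl⟩ := exists_eq_append_append_of_prefix_of_suffix hpre hsuf (by omega)
  have hm : m ≠ [] := by rintro rfl; simp at hlen; omega
  rw [isReduced_append, isReduced_append, List.getLast?_append_of_ne_nil _ hm] at hred
  obtain ⟨⟨-, hm_red, hpm⟩, -, hms⟩ := hred
  refine mem_image.2 ⟨m, mem_filter.2 ⟨mem_reducedWords.2 ⟨by simp at hlen; omega, hm_red⟩,
    ?_, ?_⟩, rfl⟩
  · rw [List.head?_eq_some_head hm, Ne, Option.some_inj]
    exact hpm _ (List.getLast?_eq_some_getLast hp) _ (List.head?_eq_some_head hm)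
  · intro h
    exact hms _ h _ (List.head?_eq_some_head hs) (by simp)

lemma two_mul_card_prefix_suffix_le {p s : List (Letter r)} (hp : p ≠ []) (hs : s ≠ []) {n : ℕ}
    (hn : p.length + s.length < n) :
    2 * r * #{w ∈ reducedWords r n | p <+: w ∧ s <:+ w}
      ≤ (2 * r - 1) ^ (n - p.length - s.length + 1) + (2 * r - 1) :=
  (Nat.mul_le_mul_left _ (card_prefix_suffix_le hp hs hn)).trans
    (two_mul_card_head_ne_getLast_ne_le (by omega) _ _)

lemma card_prefix_suffix_div_card_le (hr : 0 < r) {p s : List (Letter r)} (hp : p ≠ [])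
    (hs : s ≠ []) {n : ℕ} (hn : p.length + s.length < n) :
    (#{w ∈ reducedWords r n | p <+: w ∧ s <:+ w} : ℝ) / #(reducedWords r n) ≤
      1 / (2 * r * (2 * r - 1) ^ (p.length - 1)) * (1 / (2 * r * (2 * r - 1) ^ (s.length - 1)))
        + (2 * r - 1) / ((2 * r) ^ 2 * (2 * r - 1) ^ (n - 1)) := by
  have hq := one_le_two_mul_sub_one hr
  have hcount := (Nat.cast_le (α := ℝ)).2 (two_mul_card_prefix_suffix_le hp hs hn)
  push_cast [Nat.cast_sub (show 1 ≤ 2 * r by omega)] at hcount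
  obtain ⟨a, ha⟩ := Nat.exists_eq_succ_of_ne_zero (List.length_pos_of_ne_nil hp).ne'
  obtain ⟨b, hb⟩ := Nat.exists_eq_succ_of_ne_zero (List.length_pos_of_ne_nil hs).ne'
  obtain ⟨k, rfl⟩ : ∃ k, n = a + b + k + 2 + 1 := ⟨n - a - b - 3, by omega⟩
  rw [ha, hb, show a + b + k + 2 + 1 - (a + 1) - (b + 1) + 1 = k + 2 by omega] at hcount
  rw [ha, hb, card_reducedWords_succ, Nat.succ_sub_one, Nat.succ_sub_one]
  push_cast [Nat.cast_sub (show 1 ≤ 2 * r by omega)]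
  have hr' : (0 : ℝ) < r := by exact_mod_cast hr
  calc _ ≤ ((2 * r - 1 : ℝ) ^ (k + 2) + (2 * r - 1)) / (2 * r) /
        (2 * r * (2 * r - 1) ^ (a + b + k + 2)) := by
        gcongr
        rw [le_div_iff₀ (by positivity)]
        linarith
    _ = _ := by
        rw [pow_add, pow_add, pow_add]
        field_simp
        ring

lemma card_sphere_pos (hr : 0 < r) {n : ℕ} (hn : 0 < n) : 0 < #(sphere r n) := by
  obtain ⟨k, rfl⟩ : ∃ k, n = k + 1 := ⟨n - 1, by omega⟩
  rw [card_sphere, card_reducedWords_succ]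
  exact Nat.mul_pos (by omega) (pow_pos (by omega) _)

lemma card_sphere_prefix_inv_prefix_div_card_le (hr : 0 < r) {u v : FreeGroup (Fin r)}
    (hu : u ≠ 1) (hv : v ≠ 1) {n : ℕ} (hn : (toWord u).length + (toWord v).length < n) :
    (#{γ ∈ sphere r n | toWord u <+: toWord γ⁻¹ ∧ toWord v <+: toWord γ} : ℝ) / #(sphere r n) ≤
      1 / (2 * r * (2 * r - 1) ^ ((toWord u).length - 1)) *
          (1 / (2 * r * (2 * r - 1) ^ ((toWord v).length - 1)))
        + (2 * r - 1) / ((2 * r) ^ 2 * (2 * r - 1) ^ (n - 1)) := by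
  have hsu : invRev (toWord u) ≠ [] := by
    rw [Ne, ← List.length_eq_zero_iff, FreeGroup.invRev_length, List.length_eq_zero_iff]
    exact mt FreeGroup.toWord_eq_nil_iff.1 hu
  have hcount : #{γ ∈ sphere r n | toWord u <+: toWord γ⁻¹ ∧ toWord v <+: toWord γ} =
      #{w ∈ reducedWords r n | toWord v <+: w ∧ invRev (toWord u) <:+ w} := by
    simp_rw [FreeGroup.toWord_inv, prefix_invRev_iff, and_comm (a := invRev _ <:+ _)]
    exact card_sphere_filter n fun w => toWord v <+: w ∧ invRev (toWord u) <:+ w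
  rw [hcount, card_sphere, mul_comm (1 / _)]
  have := card_prefix_suffix_div_card_le hr (mt FreeGroup.toWord_eq_nil_iff.1 hv) hsu
    (by rwa [FreeGroup.invRev_length, add_comm])
  rwa [FreeGroup.invRev_length] at this

end Counting

section Boundary

variable {r : ℕ}

def IsVisualMeasure (μ : Measure (Boundary r)) : Prop :=
  ∀ u : FreeGroup (Fin r), u ≠ 1 →
    μ (cylinder u) = 1 / (2 * (r : ℝ≥0∞) * (2 * (r : ℝ≥0∞) - 1) ^ ((toWord u).length - 1))

lemma measurableSet_setOf_isPrefixSeq (l : List (Letter r)) :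
    MeasurableSet {ξ : Boundary r | IsPrefixSeq l ξ.1} := by
  have : {ξ : Boundary r | IsPrefixSeq l ξ.1} =
      ⋂ i ∈ range l.length, (fun ξ : Boundary r => ξ.1 i) ⁻¹' {a | l[i]? = some a} := by
    ext
    simp [IsPrefixSeq]
  rw [this]
  exact .biInter (Set.to_countable _) fun i _ =>
    (measurable_pi_apply i).comp measurable_subtype_coe (Set.toFinite _).measurableSet

lemma IsVisualMeasure.measureReal_setOf_isPrefixSeq {μ : Measure (Boundary r)}
    (hμ : IsVisualMeasure μ) (hr : 0 < r) {l : List (Letter r)} (hl : IsReduced l)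
    (hne : l ≠ []) :
    μ.real {ξ | IsPrefixSeq l ξ.1} = 1 / (2 * r * (2 * r - 1) ^ (l.length - 1)) := by
  have hmk : (mk l).toWord = l := by rw [FreeGroup.toWord_mk, hl.reduce_eq]
  have h := hμ (mk l) fun h => hne (by rw [← hmk, h, FreeGroup.toWord_one])
  rw [hmk] at h
  have hcyl : {ξ : Boundary r | IsPrefixSeq l ξ.1} = cylinder (mk l) := by rw [cylinder, hmk]
  have h1 : (1 : ℝ≥0∞) ≤ 2 * r := by norm_cast; omega
  rw [measureReal_def, hcyl, h, ENNReal.toReal_div, ENNReal.toReal_mul, ENNReal.toReal_pow,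
    ENNReal.toReal_sub_of_le h1 (by finiteness)]
  simp

lemma gromov_le_length (l : List (Letter r)) (ξ : ℕ → Letter r) : gromov l ξ ≤ l.length :=
  Nat.findGreatest_le _

lemma le_gromov_iff {l : List (Letter r)} {ξ : ℕ → Letter r} {k : ℕ} (hk : k ≤ l.length) :
    k ≤ gromov l ξ ↔ IsPrefixSeq (l.take k) ξ := by
  simp only [IsPrefixSeq, List.length_take, min_eq_left hk, List.getElem?_take]
  constructor
  · intro h i hi
    have hP : ∀ i < gromov l ξ, l[i]? = some (ξ i) :=
      Nat.findGreatest_spec (P := fun k => ∀ i < k, l[i]? = some (ξ i)) (Nat.zero_le _) (by simp)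
    rw [if_pos hi]
    exact hP i (by omega)
  · intro h
    exact Nat.le_findGreatest hk fun i hi => by simpa [hi] using h i hi

lemma gromov_lt_length_of_not_prefix {p w : List (Letter r)} {ξ : ℕ → Letter r}
    (hξ : IsPrefixSeq p ξ) (hpw : ¬ p <+: w) : gromov w ξ < p.length := by
  by_contra! hle
  have hw : p.length ≤ w.length := hle.trans (gromov_le_length w ξ)
  have htake := (le_gromov_iff hw).1 hle
  refine hpw ⟨w.drop p.length, ?_⟩
  conv_rhs => rw [← List.take_append_drop p.length w]
  congr 1
  refine List.ext_getElem? fun i => ?_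
  by_cases hi : i < p.length
  · rw [hξ i hi, htake i (by simpa [hw] using hi)]
  · rw [List.getElem?_eq_none (by omega), List.getElem?_eq_none (by simp; omega)]

lemma IsVisualMeasure.integral_pow_gromov {μ : Measure (Boundary r)} [IsProbabilityMeasure μ]
    (hμ : IsVisualMeasure μ) (hr : 0 < r) {w : List (Letter r)} (hw : IsReduced w) :
    ∫ ξ, (2 * r - 1 : ℝ) ^ gromov w ξ.1 ∂μ = 1 + w.length * (r - 1) / r := by
  set A : ℕ → Set (Boundary r) := fun k => {ξ | k < gromov w ξ.1}
  have hA (k : ℕ) (hk : k < w.length) : A k = {ξ | IsPrefixSeq (w.take (k + 1)) ξ.1} := by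
    ext ξ
    exact le_gromov_iff hk
  have hAm (k : ℕ) (hk : k ∈ range w.length) : MeasurableSet (A k) := by
    rw [hA k (mem_range.1 hk)]
    exact measurableSet_setOf_isPrefixSeq _
  have hrepr (ξ : Boundary r) : (2 * r - 1 : ℝ) ^ gromov w ξ.1 = 1 + ∑ k ∈ range w.length,
      (A k).indicator (fun _ => (2 * r - 1 : ℝ) ^ (k + 1) - (2 * r - 1) ^ k) ξ := by
    rw [pow_eq_one_add_sum_ite _ (gromov_le_length w ξ.1)]
    simp [A, Set.indicator_apply]
  have hterm (k : ℕ) (hk : k ∈ range w.length) :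
      ∫ ξ, (A k).indicator (fun _ => (2 * r - 1 : ℝ) ^ (k + 1) - (2 * r - 1) ^ k) ξ ∂μ =
        (r - 1) / r := by
    have hk' := mem_range.1 hk
    rw [integral_indicator_const _ (hAm k hk), hA k hk',
      hμ.measureReal_setOf_isPrefixSeq hr (hw.infix (List.take_prefix _ _).isInfix)
        (List.ne_nil_of_length_pos (by simp only [List.length_take]; omega))]
    have : (w.take (k + 1)).length - 1 = k := by simp only [List.length_take]; omega
    have hq : (2 * r - 1 : ℝ) ≠ 0 := by linarith [one_le_two_mul_sub_one hr]
    rw [this, smul_eq_mul, pow_succ]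
    field_simp
    ring
  have hint (k : ℕ) (hk : k ∈ range w.length) :=
    (integrable_const (μ := μ) ((2 * r - 1 : ℝ) ^ (k + 1) - (2 * r - 1) ^ k)).indicator
      (hAm k hk)
  simp_rw [hrepr]
  rw [integral_add (integrable_const 1) (integrable_finsetSum _ hint),
    integral_finsetSum _ hint, sum_congr rfl hterm]
  simp [div_eq_mul_inv, mul_assoc]

lemma sqrt_PK (hr : 0 < r) (γ : FreeGroup (Fin r)) (ξ : Boundary r) :
    √(PK γ ξ) = (2 * r - 1 : ℝ) ^ gromov (toWord γ) ξ.1 / √(2 * r - 1) ^ (toWord γ).length := by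
  have hq := one_le_two_mul_sub_one hr
  have hσ : √(2 * r - 1 : ℝ) * √(2 * r - 1) = 2 * r - 1 := Real.mul_self_sqrt (by linarith)
  have hσ0 : 0 < √(2 * r - 1 : ℝ) := Real.sqrt_pos.2 (by linarith)
  rw [Real.sqrt_eq_iff_mul_self_eq_of_pos (by positivity), PK, zpow_sub₀ (by positivity),
    show 2 * (gromov (toWord γ) ξ.1 : ℤ) = ((2 * gromov (toWord γ) ξ.1 : ℕ) : ℤ) by push_cast; rfl,
    zpow_natCast, zpow_natCast]
  generalize √(2 * r - 1 : ℝ) = σ at hσ hσ0 ⊢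
  rw [← hσ]
  field_simp
  ring

end Boundary

section HarishChandra

variable {r : ℕ}

/-- The summand `⟨π(γ)1_B, 1_{B_v}⟩ / Ξ(γ)` of the theorem. -/
noncomputable def normalizedCoeff (μ : Measure (Boundary r)) (v γ : FreeGroup (Fin r)) : ℝ :=
  (∫ ξ in cylinder v, √(PK γ ξ) ∂μ) / HC μ γ

lemma normalizedCoeff_nonneg (μ : Measure (Boundary r)) (v γ : FreeGroup (Fin r)) :
    0 ≤ normalizedCoeff μ v γ :=
  div_nonneg (integral_nonneg fun _ => Real.sqrt_nonneg _)
    (integral_nonneg fun _ => Real.sqrt_nonneg _)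

lemma normalizedCoeff_le_one (μ : Measure (Boundary r)) (v γ : FreeGroup (Fin r)) :
    normalizedCoeff μ v γ ≤ 1 := by
  by_cases hint : Integrable (fun ξ => √(PK γ ξ)) μ
  · exact div_le_one_of_le₀
      (setIntegral_le_integral hint (.of_forall fun _ => Real.sqrt_nonneg _))
      (integral_nonneg fun _ => Real.sqrt_nonneg _)
  · simp [normalizedCoeff, HC, integral_undef hint]

lemma IsVisualMeasure.HC_eq {μ : Measure (Boundary r)} [IsProbabilityMeasure μ]
    (hμ : IsVisualMeasure μ) (hr : 0 < r) (γ : FreeGroup (Fin r)) :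
    HC μ γ = (1 + (toWord γ).length * (r - 1) / r) / √(2 * r - 1) ^ (toWord γ).length := by
  simp_rw [HC, sqrt_PK hr, integral_div, hμ.integral_pow_gromov hr FreeGroup.isReduced_toWord]

lemma IsVisualMeasure.normalizedCoeff_eq {μ : Measure (Boundary r)} [IsProbabilityMeasure μ]
    (hμ : IsVisualMeasure μ) (hr : 0 < r) (v γ : FreeGroup (Fin r)) :
    normalizedCoeff μ v γ = (∫ ξ in cylinder v, (2 * r - 1 : ℝ) ^ gromov (toWord γ) ξ.1 ∂μ) /
      (1 + (toWord γ).length * (r - 1) / r) := by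
  have hσ0 : 0 < √(2 * r - 1 : ℝ) := Real.sqrt_pos.2 (by linarith [one_le_two_mul_sub_one hr])
  simp_rw [normalizedCoeff, hμ.HC_eq hr, sqrt_PK hr, integral_div]
  exact div_div_div_cancel_right₀ (by positivity) _ _

lemma IsVisualMeasure.normalizedCoeff_le_of_not_prefix {μ : Measure (Boundary r)}
    [IsProbabilityMeasure μ] (hμ : IsVisualMeasure μ) (hr : 0 < r) {v γ : FreeGroup (Fin r)}
    (hvγ : ¬ toWord v <+: toWord γ) :
    normalizedCoeff μ v γ ≤ (2 * r - 1 : ℝ) ^ ((toWord v).length - 1) /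
      (1 + (toWord γ).length * (r - 1) / r) := by
  have hq := one_le_two_mul_sub_one hr
  have hbound : ∀ ξ ∈ cylinder v,
      ‖(2 * r - 1 : ℝ) ^ gromov (toWord γ) ξ.1‖ ≤ (2 * r - 1) ^ ((toWord v).length - 1) := by
    intro ξ hξ
    rw [Real.norm_of_nonneg (by positivity)]
    exact pow_le_pow_right₀ hq (by have := gromov_lt_length_of_not_prefix hξ hvγ; omega)
  have hnum := (le_abs_self _).trans <| (norm_setIntegral_le_of_norm_le_const
    (measure_lt_top μ _) hbound).trans (mul_le_of_le_one_right (by positivity) measureReal_le_one)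
  rw [hμ.normalizedCoeff_eq hr]
  have : (0 : ℝ) ≤ r - 1 := by linarith
  exact div_le_div_of_nonneg_right hnum (by positivity)

lemma IsVisualMeasure.average_normalizedCoeff_le {μ : Measure (Boundary r)}
    [IsProbabilityMeasure μ] (hμ : IsVisualMeasure μ) (hr : 0 < r) {u v : FreeGroup (Fin r)}
    (hu : u ≠ 1) (hv : v ≠ 1) {n : ℕ} (hn : (toWord u).length + (toWord v).length < n) :
    1 / (#(sphere r n) : ℝ) *
        ∑ γ ∈ (sphere r n).filter (fun γ => toWord u <+: toWord γ⁻¹), normalizedCoeff μ v γ ≤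
      (μ (cylinder u)).toReal * (μ (cylinder v)).toReal
        + (2 * r - 1) / ((2 * r) ^ 2 * (2 * r - 1) ^ (n - 1))
        + (2 * r - 1) ^ ((toWord v).length - 1) / (1 + n * (r - 1) / r) := by
  have hratio := card_sphere_prefix_inv_prefix_div_card_le hr hu hv hn
  rw [← filter_filter] at hratio
  have hsum := sum_le_card_filter_add_card_filter_not_mul
    {γ ∈ sphere r n | toWord u <+: toWord γ⁻¹} (fun γ => toWord v <+: toWord γ)
    (f := normalizedCoeff μ v) (fun γ _ _ => normalizedCoeff_le_one μ v γ)
    (fun γ hγ hvγ => by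
      simpa [(mem_sphere.1 (mem_filter.1 hγ).1)] using hμ.normalizedCoeff_le_of_not_prefix hr hvγ)
  have hsub : (#{γ ∈ {γ ∈ sphere r n | toWord u <+: toWord γ⁻¹} | ¬ toWord v <+: toWord γ} : ℝ)
      ≤ #(sphere r n) := by
    exact_mod_cast card_le_card ((filter_subset _ _).trans (filter_subset _ _))
  have hS : (0 : ℝ) < #(sphere r n) := by exact_mod_cast card_sphere_pos hr (by omega)
  have hμu := hμ.measureReal_setOf_isPrefixSeq hr FreeGroup.isReduced_toWord
    (mt FreeGroup.toWord_eq_nil_iff.1 hu)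
  have hμv := hμ.measureReal_setOf_isPrefixSeq hr FreeGroup.isReduced_toWord
    (mt FreeGroup.toWord_eq_nil_iff.1 hv)
  rw [measureReal_def] at hμu hμv
  have hq := one_le_two_mul_sub_one hr
  have hr1 : (0 : ℝ) ≤ r - 1 := by linarith
  calc _ ≤ 1 / (#(sphere r n) : ℝ) *
        (#{γ ∈ {γ ∈ sphere r n | toWord u <+: toWord γ⁻¹} | toWord v <+: toWord γ}
          + #(sphere r n) * ((2 * r - 1) ^ ((toWord v).length - 1) / (1 + n * (r - 1) / r))) := by
        gcongr
        exact hsum.trans (by gcongr)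
    _ = (#{γ ∈ {γ ∈ sphere r n | toWord u <+: toWord γ⁻¹} | toWord v <+: toWord γ} : ℝ)
          / #(sphere r n) + (2 * r - 1) ^ ((toWord v).length - 1) / (1 + n * (r - 1) / r) := by
        field_simp
    _ ≤ _ := by rw [cylinder, cylinder, hμu, hμv]; linarith

end HarishChandra

theorem matrix_coefficient_limsup_general {r : ℕ} (hr : 2 ≤ r)
    (μ : Measure (Boundary r)) [IsProbabilityMeasure μ]
    (hμ : ∀ u : FreeGroup (Fin r), u ≠ 1 →
      μ (cylinder u) =
        1 / (2 * (r : ℝ≥0∞) * (2 * (r : ℝ≥0∞) - 1) ^ ((FreeGroup.toWord u).length - 1)))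
    (u v : FreeGroup (Fin r)) (hu : u ≠ 1) (hv : v ≠ 1) :
    Filter.limsup
      (fun n : ℕ => (1 / ((sphere r n).card : ℝ)) *
        ∑ γ ∈ (sphere r n).filter (fun γ => FreeGroup.toWord u <+: FreeGroup.toWord γ⁻¹),
          (∫ ξ in cylinder v, Real.sqrt (PK γ ξ) ∂μ) / HC μ γ)
      atTop ≤ (μ (cylinder u)).toReal * (μ (cylinder v)).toReal := by
  have hq : (1 : ℝ) < 2 * r - 1 := by
    have : (2 : ℝ) ≤ r := by exact_mod_cast hr
    linarith
  have hr1 : (0 : ℝ) < r - 1 := by linarith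
  have herr_count : Tendsto (fun n : ℕ => (2 * r - 1 : ℝ) / ((2 * r) ^ 2 * (2 * r - 1) ^ (n - 1)))
      atTop (𝓝 0) :=
    tendsto_const_nhds.div_atTop <| Tendsto.const_mul_atTop (by positivity) <|
      (tendsto_pow_atTop_atTop_of_one_lt hq).comp (tendsto_sub_atTop_nat 1)
  have herr_coeff : Tendsto (fun n : ℕ => (2 * r - 1 : ℝ) ^ ((toWord v).length - 1) /
      (1 + n * (r - 1) / r)) atTop (𝓝 0) :=
    tendsto_const_nhds.div_atTop <| tendsto_atTop_add_const_left _ 1 <|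
      (tendsto_natCast_atTop_atTop.atTop_mul_const hr1).atTop_div_const (by positivity)
  refine limsup_le_of_eventually_le_of_tendsto
    (fun n => mul_nonneg (by positivity) (sum_nonneg fun γ _ => normalizedCoeff_nonneg μ v γ))
    ((eventually_gt_atTop _).mono fun n hn =>
      IsVisualMeasure.average_normalizedCoeff_le hμ (by omega) hu hv hn)
    ?_
  simpa using (tendsto_const_nhds.add herr_count).add herr_coeff

/-- Lemma: limsup bound for matrix coefficients.
For nontrivial $u, v$:
$\limsup_n (1/|S_n|) Σ_{γ ∈ S_n, u ≼ γ⁻¹} ⟨π(γ)1_B, 1_{B_v}⟩/Ξ(γ) ≤ μ(B_u)μ(B_v)$,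
where $⟨π(γ)1_B, 1_{B_v}⟩ = ∫_{B_v} P(γ,ξ)^{1/2} dμ(ξ)$. -/
theorem matrix_coefficient_limsup {r : ℕ} (hr : 2 ≤ r)
    [BorelSpace (Boundary r)]
    (μ : Measure (Boundary r)) [IsProbabilityMeasure μ]
    (hμ : ∀ u : FreeGroup (Fin r), u ≠ 1 →
      μ (cylinder u) =
        1 / (2 * (r : ℝ≥0∞) * (2 * (r : ℝ≥0∞) - 1) ^ ((FreeGroup.toWord u).length - 1)))
    (u v : FreeGroup (Fin r)) (hu : u ≠ 1) (hv : v ≠ 1) :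
    Filter.limsup
      (fun n : ℕ => (1 / ((sphere r n).card : ℝ)) *
        ∑ γ ∈ (sphere r n).filter (fun γ => FreeGroup.toWord u <+: FreeGroup.toWord γ⁻¹),
          (∫ ξ in cylinder v, Real.sqrt (PK γ ξ) ∂μ) / HC μ γ)
      atTop ≤ (μ (cylinder u)).toReal * (μ (cylinder v)).toReal :=
  matrix_coefficient_limsup_general hr μ hμ u v hu hv

end ArxivFree
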